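/- arXiv:math/9801137 — 6 statements merged into one kernel-verified Lean document; each statement's English description precedes it below -/
import Mathlib

section
/- Let a1, a2, a3 be elements of SU(2) with a1·a2·a3 = I, and suppose the eigenvalues of a_j are -e^{iC_j} and -e^{-iC_j} for real numbers C_j (j=1,2,3). Then cos²C₁ + cos²C₂ + cos²C₃ + 2·cosC₁·cosC₂·cosC₃ ≤ 1. -/
/-!
For `A, B ∈ SL₂` with `x = tr A`, `y = tr B`, `z = tr AB`, Fricke's identity gives
`tr (A B A⁻¹ B⁻¹) = x² + y² + z² - x y z - 2`. In `SU(2)` the real part of a trace is at most `2`,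
and here `x = -2 cos C₁`, `y = -2 cos C₂`, `z = tr a₃⁻¹ = tr a₃ = -2 cos C₃`; the bound on the
trace of the commutator of `a₁` and `a₂` is then exactly the inequality.
-/

open Complex Matrix

namespace Matrix

theorem trace_fin_two_eq_add_inv_of_mem_spectrum {K : Type*} [Field K]
    {A : Matrix (Fin 2) (Fin 2) K} (hA : A.det = 1) {r : K} (hr : r ∈ spectrum K A) :
    A.trace = r + r⁻¹ := by
  rw [mem_spectrum_iff_isRoot_charpoly, charpoly_fin_two, Polynomial.IsRoot.def] at hr
  simp only [Polynomial.eval_add, Polynomial.eval_sub, Polynomial.eval_pow, Polynomial.eval_mul,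
    Polynomial.eval_X, Polynomial.eval_C, hA] at hr
  have hr0 : r ≠ 0 := by rintro rfl; simp at hr
  field_simp
  linear_combination -hr

theorem trace_adjugate_fin_two {R : Type*} [CommRing R] (A : Matrix (Fin 2) (Fin 2) R) :
    A.adjugate.trace = A.trace := by
  rw [adjugate_fin_two, trace_fin_two, trace_fin_two]
  simp only [of_apply, cons_val', cons_val_zero, cons_val_one, empty_val', cons_val_fin_one]
  ring

theorem trace_mul_mul_adjugate_mul_adjugate_fin_two {R : Type*} [CommRing R]
    {A B : Matrix (Fin 2) (Fin 2) R} (hA : A.det = 1) (hB : B.det = 1) :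
    (A * B * A.adjugate * B.adjugate).trace =
      A.trace ^ 2 + B.trace ^ 2 + (A * B).trace ^ 2 - A.trace * B.trace * (A * B).trace - 2 := by
  rw [det_fin_two] at hA hB
  simp only [adjugate_fin_two, trace_fin_two, mul_apply, Fin.sum_univ_two, of_apply, cons_val',
    cons_val_zero, cons_val_one, empty_val', cons_val_fin_one]
  linear_combination ((A 0 0 + A 1 1) ^ 2 - 2) * hB +
    ((B 0 0 + B 1 1) ^ 2 - 2 * (B 0 0 * B 1 1 - B 0 1 * B 1 0)) * hA

theorem star_eq_adjugate_of_mem_specialUnitaryGroup {n α : Type*} [Fintype n] [DecidableEq n]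
    [CommRing α] [StarRing α] {A : Matrix n n α} (hA : A ∈ specialUnitaryGroup n α) :
    star A = A.adjugate := by
  rw [mem_specialUnitaryGroup_iff] at hA
  calc star A = star A * (A * A.adjugate) := by rw [mul_adjugate, hA.2, one_smul, mul_one]
    _ = A.adjugate := by rw [← mul_assoc, Unitary.star_mul_self_of_mem hA.1, one_mul]

theorem re_trace_le_card_of_mem_unitaryGroup {n 𝕜 : Type*} [Fintype n] [DecidableEq n] [RCLike 𝕜]
    {U : Matrix n n 𝕜} (hU : U ∈ unitaryGroup n 𝕜) : RCLike.re U.trace ≤ Fintype.card n := by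
  rw [trace, map_sum]
  calc ∑ i, RCLike.re (U i i) ≤ ∑ _i : n, (1 : ℝ) :=
        Finset.sum_le_sum fun i _ => (RCLike.re_le_norm _).trans (entry_norm_bound_of_unitary hU i i)
    _ = Fintype.card n := by simp

theorem trace_fin_two_eq_neg_two_cos {A : Matrix (Fin 2) (Fin 2) ℂ} (hA : A.det = 1) {C : ℝ}
    (hC : -exp (I * C) ∈ spectrum ℂ A) : A.trace = -(2 * Real.cos C) := by
  rw [trace_fin_two_eq_add_inv_of_mem_spectrum hA hC, inv_neg, ← Complex.exp_neg, ofReal_cos, cos]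
  ring_nf

end Matrix

/-- For `a₁ a₂ a₃ ∈ SU(2)` with `a₁·a₂·a₃ = 1` and eigenvalues of `aⱼ`
equal to `-e^{±i Cⱼ}`, one has
`cos²C₁ + cos²C₂ + cos²C₃ + 2 cos C₁ cos C₂ cos C₃ ≤ 1`. -/
theorem su2_trace_inequality
    (a₁ a₂ a₃ : Matrix.specialUnitaryGroup (Fin 2) ℂ) (C₁ C₂ C₃ : ℝ)
    (hprod : a₁ * a₂ * a₃ = 1)
    (h₁ : spectrum ℂ (a₁ : Matrix (Fin 2) (Fin 2) ℂ) =
      {-Complex.exp (Complex.I * C₁), -Complex.exp (-(Complex.I * C₁))})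
    (h₂ : spectrum ℂ (a₂ : Matrix (Fin 2) (Fin 2) ℂ) =
      {-Complex.exp (Complex.I * C₂), -Complex.exp (-(Complex.I * C₂))})
    (h₃ : spectrum ℂ (a₃ : Matrix (Fin 2) (Fin 2) ℂ) =
      {-Complex.exp (Complex.I * C₃), -Complex.exp (-(Complex.I * C₃))}) :
    Real.cos C₁ ^ 2 + Real.cos C₂ ^ 2 + Real.cos C₃ ^ 2 +
      2 * Real.cos C₁ * Real.cos C₂ * Real.cos C₃ ≤ 1 := by
  have hdet (a : specialUnitaryGroup (Fin 2) ℂ) : (a : Matrix (Fin 2) (Fin 2) ℂ).det = 1 :=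
    (mem_specialUnitaryGroup_iff.mp a.2).2
  have hadj (a : specialUnitaryGroup (Fin 2) ℂ) : ((a⁻¹ : specialUnitaryGroup (Fin 2) ℂ) :
      Matrix (Fin 2) (Fin 2) ℂ) = adjugate a :=
    star_eq_adjugate_of_mem_specialUnitaryGroup a.2
  have htr₁ := trace_fin_two_eq_neg_two_cos (hdet a₁) (h₁ ▸ Set.mem_insert _ _)
  have htr₂ := trace_fin_two_eq_neg_two_cos (hdet a₂) (h₂ ▸ Set.mem_insert _ _)
  have htr₁₂ : ((a₁ * a₂ : specialUnitaryGroup (Fin 2) ℂ) : Matrix (Fin 2) (Fin 2) ℂ).trace =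
      -(2 * Real.cos C₃) := by
    rw [eq_inv_of_mul_eq_one_left hprod, hadj, trace_adjugate_fin_two]
    exact trace_fin_two_eq_neg_two_cos (hdet a₃) (h₃ ▸ Set.mem_insert _ _)
  have hcommutator := re_trace_le_card_of_mem_unitaryGroup
    (specialUnitaryGroup_le_unitaryGroup (a₁ * a₂ * a₁⁻¹ * a₂⁻¹).2)
  simp only [Submonoid.coe_mul, hadj] at hcommutator htr₁₂
  rw [trace_mul_mul_adjugate_mul_adjugate_fin_two (hdet a₁) (hdet a₂), htr₁, htr₂, htr₁₂] at hcommutator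
  simp only [RCLike.re_to_complex] at hcommutator
  norm_cast at hcommutator
  rw [Fintype.card_fin, Nat.cast_ofNat] at hcommutator
  linarith
end

section
/- Let a1 ∈ SU(2) be the diagonal matrix diag(-e^{iC₁}, -e^{-iC₁}) with sin C₁ ≠ 0, and let a2 = [[p, -q̄],[q, p̄]] ∈ SU(2) (so |p|² + |q|² = 1). If tr(a2) = -2cos C₂ and tr(a1·a2) = -2cos C₃, then |p|² = (cos²C₂ + cos²C₃ + 2cosC₁·cosC₂·cosC₃)/sin²C₁. -/
open Complex Matrix

/-
Write `p = x + iy`. The first trace condition reads `2x = -2 cos C₂`. Since `a₁` is diagonal,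
`tr (a₁ a₂) = -(e^{iC₁} p + conj (e^{iC₁} p)) = -2 Re (e^{iC₁} p)`, so the second one reads
`x cos C₁ - y sin C₁ = cos C₃`. As `sin C₁ ≠ 0` this determines `y`, and `x² + y²` is the formula.
-/

theorem trace_su2Form (p q : ℂ) :
    (!![p, -(starRingEnd ℂ) q; q, (starRingEnd ℂ) p]).trace = 2 * p.re := by
  rw [trace_fin_two_of, add_conj, ofReal_mul, ofReal_ofNat]

theorem trace_negExpDiag_mul_su2Form (θ : ℝ) (p q : ℂ) :
    (!![-exp (I * θ), 0; 0, -exp (-(I * θ))] *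
        !![p, -(starRingEnd ℂ) q; q, (starRingEnd ℂ) p]).trace =
      -2 * (Real.cos θ * p.re - Real.sin θ * p.im) := by
  have hconj : exp (-(I * θ)) * (starRingEnd ℂ) p = (starRingEnd ℂ) (exp (I * θ) * p) := by
    rw [map_mul, ← exp_conj, map_mul, conj_I, conj_ofReal, neg_mul]
  have hre : (exp (I * θ) * p).re = Real.cos θ * p.re - Real.sin θ * p.im := by
    rw [mul_comm I, exp_mul_I, ← ofReal_cos, ← ofReal_sin]
    simp only [mul_re, add_re, add_im, ofReal_re, ofReal_im, mul_im, I_re, I_im]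
    ring
  rw [mul_fin_two, trace_fin_two_of]
  simp only [zero_mul, add_zero, zero_add, neg_mul, hconj, ← neg_add, add_conj, hre]
  push_cast
  ring

theorem normSq_eq_of_re_of_cos_mul_re_sub_sin_mul_im (θ c₂ c₃ : ℝ) (z : ℂ)
    (hθ : Real.sin θ ≠ 0) (hre : z.re = -c₂)
    (him : Real.cos θ * z.re - Real.sin θ * z.im = c₃) :
    normSq z = (c₂ ^ 2 + c₃ ^ 2 + 2 * Real.cos θ * c₂ * c₃) / Real.sin θ ^ 2 := by
  have hy : Real.sin θ * z.im = -(Real.cos θ * c₂) - c₃ := by rw [hre] at him; linarith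
  rw [normSq_apply, eq_div_iff (pow_ne_zero 2 hθ)]
  linear_combination (z.re - c₂) * Real.sin θ ^ 2 * hre
    + (Real.sin θ * z.im - Real.cos θ * c₂ - c₃) * hy + c₂ ^ 2 * Real.sin_sq_add_cos_sq θ

theorem su2_p_norm_formula_general (C₁ C₂ C₃ : ℝ) (p q : ℂ)
    (hC₁ : Real.sin C₁ ≠ 0)
    (a₁ a₂ : Matrix (Fin 2) (Fin 2) ℂ)
    (ha₁ : a₁ = !![-Complex.exp (Complex.I * C₁), 0; 0, -Complex.exp (-(Complex.I * C₁))])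
    (ha₂ : a₂ = !![p, -(starRingEnd ℂ) q; q, (starRingEnd ℂ) p])
    (htr₂ : a₂.trace = -2 * Real.cos C₂)
    (htr₃ : (a₁ * a₂).trace = -2 * Real.cos C₃) :
    ‖p‖ ^ 2 =
      (Real.cos C₂ ^ 2 + Real.cos C₃ ^ 2 +
        2 * Real.cos C₁ * Real.cos C₂ * Real.cos C₃) / Real.sin C₁ ^ 2 := by
  subst ha₁ ha₂
  rw [trace_su2Form] at htr₂
  rw [trace_negExpDiag_mul_su2Form] at htr₃
  have hre : 2 * p.re = -2 * Real.cos C₂ := by exact_mod_cast htr₂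
  have him : -2 * (Real.cos C₁ * p.re - Real.sin C₁ * p.im) = -2 * Real.cos C₃ := by
    exact_mod_cast htr₃
  rw [Complex.sq_norm]
  exact normSq_eq_of_re_of_cos_mul_re_sub_sin_mul_im C₁ _ _ p hC₁ (by linarith) (by linarith)

/-- with `a₁ = diag(-e^{iC₁}, -e^{-iC₁})` (`sin C₁ ≠ 0`) and
`a₂ = [[p, -q̄],[q, p̄]] ∈ SU(2)`, if `tr a₂ = -2 cos C₂` and `tr (a₁ a₂) = -2 cos C₃`,
then `|p|² = (cos²C₂ + cos²C₃ + 2 cos C₁ cos C₂ cos C₃)/sin²C₁`. -/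
theorem su2_p_norm_formula (C₁ C₂ C₃ : ℝ) (p q : ℂ)
    (hC₁ : Real.sin C₁ ≠ 0)
    (hpq : ‖p‖ ^ 2 + ‖q‖ ^ 2 = 1)
    (a₁ a₂ : Matrix (Fin 2) (Fin 2) ℂ)
    (ha₁ : a₁ = !![-Complex.exp (Complex.I * C₁), 0; 0, -Complex.exp (-(Complex.I * C₁))])
    (ha₂ : a₂ = !![p, -(starRingEnd ℂ) q; q, (starRingEnd ℂ) p])
    (htr₂ : a₂.trace = -2 * Real.cos C₂)
    (htr₃ : (a₁ * a₂).trace = -2 * Real.cos C₃) :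
    ‖p‖ ^ 2 =
      (Real.cos C₂ ^ 2 + Real.cos C₃ ^ 2 +
        2 * Real.cos C₁ * Real.cos C₂ * Real.cos C₃) / Real.sin C₁ ^ 2 :=
  su2_p_norm_formula_general C₁ C₂ C₃ p q hC₁ a₁ a₂ ha₁ ha₂ htr₂ htr₃
end

section
/- Let Γ ⊂ SU(2) be a non-abelian subgroup. If σ ∈ SL(2,ℂ) satisfies σ·γ·σ⁻¹ ∈ SU(2) for all γ ∈ Γ, then σ*·σ is a scalar matrix (equal to the identity in PSL(2,ℂ)), i.e., σ is unitary up to scalar. -/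
/-!
If `σ γ σ⁻¹` is unitary for a unitary `γ`, then `γ` commutes with `σ* σ`. Modulo scalars a
`2 × 2` matrix `X` is the vector `(X₀₀ - X₁₁, X₀₁, X₁₀)`, and the commutator `XY - YX` is read
off the cross product of the two vectors. So the matrices commuting with a non-scalar `P` have
vectors parallel to that of `P`, and hence commute with each other: if `σ* σ` were not scalar,
`Γ` would be abelian.
-/

open Matrix

section CrossProduct

variable {F : Type*} [Field F]

theorem exists_smul_eq_of_cross_eq_zero {p u : Fin 3 → F} (hp : p ≠ 0) (h : p ⨯₃ u = 0) :
    ∃ a : F, a • p = u := by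
  by_contra! hne
  exact crossProduct_ne_zero_iff_linearIndependent.2 ((LinearIndependent.pair_iff' hp).2 hne) h

theorem cross_eq_zero_of_cross_eq_zero_of_ne_zero {p u v : Fin 3 → F} (hp : p ≠ 0)
    (hu : p ⨯₃ u = 0) (hv : p ⨯₃ v = 0) : u ⨯₃ v = 0 := by
  obtain ⟨a, rfl⟩ := exists_smul_eq_of_cross_eq_zero hp hu
  obtain ⟨b, rfl⟩ := exists_smul_eq_of_cross_eq_zero hp hv
  simp [cross_self]

end CrossProduct

namespace Matrix

section CommRing

variable {R : Type*} [CommRing R]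

def coordsModScalars (X : Matrix (Fin 2) (Fin 2) R) : Fin 3 → R :=
  ![X 0 0 - X 1 1, X 0 1, X 1 0]

theorem mul_sub_mul_eq_cross_coordsModScalars (X Y : Matrix (Fin 2) (Fin 2) R) :
    let w := coordsModScalars X ⨯₃ coordsModScalars Y
    X * Y - Y * X = !![w 0, w 2; w 1, -w 0] := by
  ext i j
  fin_cases i <;> fin_cases j <;>
    simp only [Fin.zero_eta, Fin.mk_one, Fin.isValue, sub_apply, mul_apply, Fin.sum_univ_two,
      coordsModScalars, cross_apply, cons_val_zero, cons_val_one, cons_val, cons_val',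
      cons_val_fin_one, of_apply, neg_sub] <;> ring

theorem commute_iff_cross_coordsModScalars_eq_zero {X Y : Matrix (Fin 2) (Fin 2) R} :
    Commute X Y ↔ coordsModScalars X ⨯₃ coordsModScalars Y = 0 := by
  rw [commute_iff_eq, ← sub_eq_zero, mul_sub_mul_eq_cross_coordsModScalars]
  constructor
  · intro h
    ext i
    fin_cases i
    · exact congrFun₂ h 0 0
    · exact congrFun₂ h 1 0
    · exact congrFun₂ h 0 1
  · intro h
    simp only [h, Pi.zero_apply, neg_zero]
    exact (eta_fin_two 0).symm

theorem coordsModScalars_eq_zero_iff {X : Matrix (Fin 2) (Fin 2) R} :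
    coordsModScalars X = 0 ↔ ∃ c : R, X = c • 1 := by
  constructor
  · intro h
    have hdiag : X 0 0 = X 1 1 := sub_eq_zero.1 (congrFun h 0)
    have h01 : X 0 1 = 0 := congrFun h 1
    have h10 : X 1 0 = 0 := congrFun h 2
    refine ⟨X 1 1, ?_⟩
    ext i j
    fin_cases i <;> fin_cases j <;> simp [hdiag, h01, h10]
  · rintro ⟨c, rfl⟩
    ext i
    fin_cases i <;> simp [coordsModScalars]

end CommRing

theorem commute_of_commute_of_not_scalar {F : Type*} [Field F]
    {P X Y : Matrix (Fin 2) (Fin 2) F} (hP : ¬ ∃ c : F, P = c • 1)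
    (hX : Commute P X) (hY : Commute P Y) : Commute X Y := by
  rw [commute_iff_cross_coordsModScalars_eq_zero] at *
  exact cross_eq_zero_of_cross_eq_zero_of_ne_zero (mt coordsModScalars_eq_zero_iff.1 hP) hX hY

end Matrix

theorem commute_star_mul_self_of_conj_mem_unitary {M : Type*} [Monoid M] [StarMul M]
    {σ σ' γ : M} (hσ : σ' * σ = 1) (hγ : γ ∈ unitary M) (h : σ * γ * σ' ∈ unitary M) :
    Commute (star σ * σ) γ := by
  have hconj : star γ * (star σ * σ) * γ = star σ * σ :=
    calc star γ * (star σ * σ) * γ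
        = star (σ' * σ) * (star γ * (star σ * σ) * γ) * (σ' * σ) := by
          rw [hσ, star_one, one_mul, mul_one]
      _ = star σ * (star (σ * γ * σ') * (σ * γ * σ')) * σ := by simp only [star_mul, mul_assoc]
      _ = star σ * σ := by rw [Unitary.star_mul_self_of_mem h, mul_one]
  calc star σ * σ * γ = γ * star γ * (star σ * σ) * γ := by
        rw [Unitary.mul_star_self_of_mem hγ, one_mul]
    _ = γ * (star γ * (star σ * σ) * γ) := by simp only [mul_assoc]
    _ = γ * (star σ * σ) := by rw [hconj]

theorem conjugator_of_nonabelian_is_scalar_general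
    (Γ : Subgroup (Matrix.unitaryGroup (Fin 2) ℂ))
    (hnonab : ∃ γ ∈ Γ, ∃ γ' ∈ Γ, γ * γ' ≠ γ' * γ)
    (σ : Matrix.SpecialLinearGroup (Fin 2) ℂ)
    (hconj : ∀ γ ∈ Γ,
      (σ : Matrix (Fin 2) (Fin 2) ℂ) * (γ : Matrix (Fin 2) (Fin 2) ℂ) *
          ((σ⁻¹ : Matrix.SpecialLinearGroup (Fin 2) ℂ) : Matrix (Fin 2) (Fin 2) ℂ) ∈
        Matrix.unitaryGroup (Fin 2) ℂ) :
    ∃ c : ℂ, (σ : Matrix (Fin 2) (Fin 2) ℂ)ᴴ * (σ : Matrix (Fin 2) (Fin 2) ℂ) =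
      c • (1 : Matrix (Fin 2) (Fin 2) ℂ) := by
  by_contra hscalar
  have hσ : ((σ⁻¹ : SpecialLinearGroup (Fin 2) ℂ) : Matrix (Fin 2) (Fin 2) ℂ) * σ = 1 :=
    congrArg Subtype.val (inv_mul_cancel σ)
  have hcomm : ∀ γ ∈ Γ, Commute ((σ : Matrix (Fin 2) (Fin 2) ℂ)ᴴ * σ) γ := fun γ hγ =>
    commute_star_mul_self_of_conj_mem_unitary hσ γ.2 (hconj γ hγ)
  obtain ⟨γ, hγ, γ', hγ', hne⟩ := hnonab
  exact hne (Subtype.ext (commute_of_commute_of_not_scalar hscalar (hcomm γ hγ) (hcomm γ' hγ')))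

/-- if `Γ` is a non-abelian subgroup of `SU(2)` and `σ ∈ SL(2,ℂ)` conjugates
`Γ` into `SU(2)`, then `σ* σ` is a scalar matrix. -/
theorem conjugator_of_nonabelian_is_scalar
    (Γ : Subgroup (Matrix.unitaryGroup (Fin 2) ℂ))
    (hsu : ∀ γ ∈ Γ, ((γ : Matrix (Fin 2) (Fin 2) ℂ)).det = 1)
    (hnonab : ∃ γ ∈ Γ, ∃ γ' ∈ Γ, γ * γ' ≠ γ' * γ)
    (σ : Matrix.SpecialLinearGroup (Fin 2) ℂ)
    (hconj : ∀ γ ∈ Γ,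
      (σ : Matrix (Fin 2) (Fin 2) ℂ) * (γ : Matrix (Fin 2) (Fin 2) ℂ) *
          ((σ⁻¹ : Matrix.SpecialLinearGroup (Fin 2) ℂ) : Matrix (Fin 2) (Fin 2) ℂ) ∈
        Matrix.unitaryGroup (Fin 2) ℂ) :
    ∃ c : ℂ, (σ : Matrix (Fin 2) (Fin 2) ℂ)ᴴ * (σ : Matrix (Fin 2) (Fin 2) ℂ) =
      c • (1 : Matrix (Fin 2) (Fin 2) ℂ) :=
  conjugator_of_nonabelian_is_scalar_general Γ hnonab σ hconj
end

section
/- Let ν be a non-integral real number and m a positive integer. The system ν/a₁ + m/(a₁-1) - 2/(a₁-a₂) = 0 and ν/a₂ + m/(a₂-1) - 2/(a₂-a₁) = 0 for distinct a₁, a₂ ∈ ℂ \ {0,1} has a solution if and only if m ≠ 1. -/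
/-!
Writing `s = a₁ + a₂` and `p = a₁ a₂`, the difference of the two cleared equations is
`(a₁ - a₂)` times `(ν + μ - 2) s = 2 (ν - 1)` and their sum is `2 (ν + μ - 1) p = ν s`
modulo the first, so for distinct `a₁, a₂` the system is a linear system in `s` and `p`.
When `μ = 1` it forces `s = 2`, `p = 1`, i.e. `a₁ = a₂ = 1`. When `μ ≠ 1` its solution has
discriminant `s² - 4p = 4 (ν - 1)(1 - μ) / ((ν + μ - 2)² (ν + μ - 1))` and
`(1 - a₁)(1 - a₂) = μ (μ - 1) / ((ν + μ - 2)(ν + μ - 1))`, both nonzero, so the roots of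
`X² - s X + p` are a solution.
-/

section ResidueSystem

variable {K : Type*} [Field K]

def residueExpr (ν μ a b : K) : K := ν / a + μ / (a - 1) - 2 / (a - b)

def IsResidueSolution (ν μ a₁ a₂ : K) : Prop :=
  a₁ ≠ a₂ ∧ a₁ ≠ 0 ∧ a₁ ≠ 1 ∧ a₂ ≠ 0 ∧ a₂ ≠ 1 ∧
    residueExpr ν μ a₁ a₂ = 0 ∧ residueExpr ν μ a₂ a₁ = 0

theorem residueExpr_eq_zero_iff {ν μ a b : K} (ha₀ : a ≠ 0) (ha₁ : a ≠ 1) (hab : a ≠ b) :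
    residueExpr ν μ a b = 0 ↔ ((ν + μ) * a - ν) * (a - b) = 2 * a * (a - 1) := by
  have ha₁' : a - 1 ≠ 0 := sub_ne_zero.2 ha₁
  have hab' : a - b ≠ 0 := sub_ne_zero.2 hab
  rw [residueExpr, div_add_div _ _ ha₀ ha₁', div_sub_div _ _ (mul_ne_zero ha₀ ha₁') hab',
    div_eq_zero_iff, or_iff_left (mul_ne_zero (mul_ne_zero ha₀ ha₁') hab')]
  constructor <;> intro h <;> linear_combination h

theorem residueExpr_system_iff [NeZero (2 : K)] {ν μ a₁ a₂ : K} (hne : a₁ ≠ a₂)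
    (h₁₀ : a₁ ≠ 0) (h₁₁ : a₁ ≠ 1) (h₂₀ : a₂ ≠ 0) (h₂₁ : a₂ ≠ 1) :
    residueExpr ν μ a₁ a₂ = 0 ∧ residueExpr ν μ a₂ a₁ = 0 ↔
      (ν + μ - 2) * (a₁ + a₂) = 2 * (ν - 1) ∧ 2 * (ν + μ - 1) * (a₁ * a₂) = ν * (a₁ + a₂) := by
  rw [residueExpr_eq_zero_iff h₁₀ h₁₁ hne, residueExpr_eq_zero_iff h₂₀ h₂₁ hne.symm]
  have hd : a₁ - a₂ ≠ 0 := sub_ne_zero.2 hne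
  have h2 : (2 : K) ≠ 0 := two_ne_zero
  constructor
  · rintro ⟨h₁, h₂⟩
    have hs : (ν + μ - 2) * (a₁ + a₂) = 2 * (ν - 1) :=
      mul_left_cancel₀ hd (by linear_combination h₁ - h₂)
    refine ⟨hs, mul_left_cancel₀ h2 ?_⟩
    linear_combination (a₁ + a₂) * hs - h₁ - h₂
  · rintro ⟨hs, hp⟩
    refine ⟨mul_left_cancel₀ h2 ?_, mul_left_cancel₀ h2 ?_⟩
    · linear_combination (2 * a₁) * hs - 2 * hp
    · linear_combination (2 * a₂) * hs - 2 * hp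

theorem not_isResidueSolution_one [NeZero (2 : K)] {ν a₁ a₂ : K} (hν₀ : ν ≠ 0)
    (hν₁ : ν ≠ 1) : ¬IsResidueSolution ν 1 a₁ a₂ := by
  rintro ⟨hne, h₁₀, h₁₁, h₂₀, h₂₁, hres⟩
  obtain ⟨hs, hp⟩ := (residueExpr_system_iff hne h₁₀ h₁₁ h₂₀ h₂₁).1 hres
  have hsum : a₁ + a₂ = 2 :=
    mul_left_cancel₀ (sub_ne_zero.2 hν₁) (by linear_combination hs)
  have hprod : a₁ * a₂ = 1 :=
    mul_left_cancel₀ (mul_ne_zero two_ne_zero hν₀) (by linear_combination hp + ν * hsum)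
  exact h₁₁ (sub_eq_zero.1 (pow_eq_zero_iff two_ne_zero |>.1
    (by linear_combination a₁ * hsum - hprod)))

theorem exists_ne_add_eq_mul_eq [IsAlgClosed K] [NeZero (2 : K)] {s p : K}
    (h : s ^ 2 - 4 * p ≠ 0) : ∃ a b : K, a ≠ b ∧ a + b = s ∧ a * b = p := by
  obtain ⟨d, hd⟩ := IsAlgClosed.exists_eq_mul_self (s ^ 2 - 4 * p)
  have hd₀ : d ≠ 0 := by rintro rfl; exact h (by simpa using hd)
  refine ⟨(s + d) / 2, (s - d) / 2, fun heq => hd₀ ?_, by field_simp; ring, ?_⟩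
  · field_simp at heq
    exact mul_left_cancel₀ two_ne_zero (by linear_combination heq)
  · field_simp
    linear_combination hd

theorem exists_isResidueSolution [IsAlgClosed K] [NeZero (2 : K)] {ν μ : K} (hν₀ : ν ≠ 0)
    (hν₁ : ν ≠ 1) (hμ₀ : μ ≠ 0) (hμ₁ : μ ≠ 1) (h₂ : ν + μ - 2 ≠ 0) (h₁ : ν + μ - 1 ≠ 0) :
    ∃ a₁ a₂ : K, IsResidueSolution ν μ a₁ a₂ := by
  set s := 2 * (ν - 1) / (ν + μ - 2) with hs
  set p := ν * s / (2 * (ν + μ - 1)) with hp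
  have hdisc : s ^ 2 - 4 * p = 2 ^ 2 * (ν - 1) * (1 - μ) / ((ν + μ - 2) ^ 2 * (ν + μ - 1)) := by
    rw [hp, hs]; field_simp; ring
  have hprod_sub_one : p - s + 1 = μ * (μ - 1) / ((ν + μ - 2) * (ν + μ - 1)) := by
    rw [hp, hs]; field_simp; ring
  have hp₀ : p ≠ 0 :=
    div_ne_zero (mul_ne_zero hν₀ (div_ne_zero (mul_ne_zero two_ne_zero (sub_ne_zero.2 hν₁)) h₂))
      (mul_ne_zero two_ne_zero h₁)
  obtain ⟨a₁, a₂, hne, hsum, hprod⟩ := exists_ne_add_eq_mul_eq (s := s) (p := p) (by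
    rw [hdisc]
    exact div_ne_zero (mul_ne_zero (mul_ne_zero (pow_ne_zero 2 two_ne_zero) (sub_ne_zero.2 hν₁))
      (sub_ne_zero.2 (Ne.symm hμ₁))) (mul_ne_zero (pow_ne_zero 2 h₂) h₁))
  have hprod_sub_one₀ : (a₁ - 1) * (a₂ - 1) ≠ 0 := by
    rw [show (a₁ - 1) * (a₂ - 1) = p - s + 1 by rw [← hsum, ← hprod]; ring, hprod_sub_one]
    exact div_ne_zero (mul_ne_zero hμ₀ (sub_ne_zero.2 hμ₁)) (mul_ne_zero h₂ h₁)
  have h₁₀ : a₁ ≠ 0 := left_ne_zero_of_mul (hprod ▸ hp₀)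
  have h₂₀ : a₂ ≠ 0 := right_ne_zero_of_mul (hprod ▸ hp₀)
  have h₁₁ : a₁ ≠ 1 := sub_ne_zero.1 (left_ne_zero_of_mul hprod_sub_one₀)
  have h₂₁ : a₂ ≠ 1 := sub_ne_zero.1 (right_ne_zero_of_mul hprod_sub_one₀)
  refine ⟨a₁, a₂, hne, h₁₀, h₁₁, h₂₀, h₂₁, (residueExpr_system_iff hne h₁₀ h₁₁ h₂₀ h₂₁).2 ⟨?_, ?_⟩⟩
  · rw [hsum, hs]; field_simp
  · rw [hsum, hprod, hp]; field_simp

theorem exists_isResidueSolution_iff [IsAlgClosed K] [NeZero (2 : K)] {ν μ : K} (hν₀ : ν ≠ 0)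
    (hν₁ : ν ≠ 1) (hμ₀ : μ ≠ 0) (h₂ : ν + μ - 2 ≠ 0) (h₁ : ν + μ - 1 ≠ 0) :
    (∃ a₁ a₂ : K, IsResidueSolution ν μ a₁ a₂) ↔ μ ≠ 1 := by
  refine ⟨?_, fun hμ₁ => exists_isResidueSolution hν₀ hν₁ hμ₀ hμ₁ h₂ h₁⟩
  rintro ⟨a₁, a₂, h⟩ rfl
  exact not_isResidueSolution_one hν₀ hν₁ h

end ResidueSystem

/-- for non-integral real `ν` and a positive integer `m`, the `N = 2`
residue system has a solution with distinct `a₁, a₂ ∈ ℂ \ {0,1}` iff `m ≠ 1`. -/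
theorem residue_equation_N2 (ν : ℝ) (hν : ¬∃ n : ℤ, ν = n) (m : ℕ) (hm : 0 < m) :
    (∃ a₁ a₂ : ℂ, a₁ ≠ a₂ ∧ a₁ ≠ 0 ∧ a₁ ≠ 1 ∧ a₂ ≠ 0 ∧ a₂ ≠ 1 ∧
        (ν : ℂ) / a₁ + (m : ℂ) / (a₁ - 1) - 2 / (a₁ - a₂) = 0 ∧
        (ν : ℂ) / a₂ + (m : ℂ) / (a₂ - 1) - 2 / (a₂ - a₁) = 0) ↔ m ≠ 1 := by
  have hν_int (n : ℤ) : (ν : ℂ) ≠ n := fun h => hν ⟨n, by exact_mod_cast h⟩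
  have hν₀ : (ν : ℂ) ≠ 0 := by simpa using hν_int 0
  have hν₁ : (ν : ℂ) ≠ 1 := by simpa using hν_int 1
  have h₂ : (ν : ℂ) + m - 2 ≠ 0 := fun h => hν_int (2 - m) (by push_cast; linear_combination h)
  have h₁ : (ν : ℂ) + m - 1 ≠ 0 := fun h => hν_int (1 - m) (by push_cast; linear_combination h)
  exact (exists_isResidueSolution_iff hν₀ hν₁ (Nat.cast_ne_zero.2 hm.ne') h₂ h₁).trans
    Nat.cast_ne_one
end

section
/- Let β₁, β₂ be positive integers and g a rational function on ℂ whose derivative satisfies g'(z) = c·z^{β₁}(z-1)^{β₂}/∏_{j=1}^{N}(z-a_j)² for a nonzero constant c and distinct a₁,…,a_N ∈ ℂ\{0,1}. Then for each j, the residue condition β₁/a_j + β₂/(a_j-1) - Σ_{k≠j} 2/(a_j-a_k) = 0 holds. -/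
open Finset

open Metric Complex

/-- if `g` has derivative `c z^{β₁} (z-1)^{β₂} / ∏ (z - aⱼ)²` away from the
poles `aⱼ` (distinct, `≠ 0, 1`), then the residues vanish:
`β₁/aⱼ + β₂/(aⱼ-1) - Σ_{k≠j} 2/(aⱼ-a_k) = 0` for each `j`. -/
theorem residues_vanish_of_primitive (β₁ β₂ : ℕ) (hβ₁ : 0 < β₁) (hβ₂ : 0 < β₂)
    (N : ℕ) (a : Fin N → ℂ) (hinj : Function.Injective a)
    (ha : ∀ j, a j ≠ 0 ∧ a j ≠ 1)
    (c : ℂ) (hc : c ≠ 0) (g : ℂ → ℂ)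
    (hg : ∀ z : ℂ, (∀ j, z ≠ a j) →
      HasDerivAt g (c * z ^ β₁ * (z - 1) ^ β₂ / ∏ j, (z - a j) ^ 2) z) :
    ∀ j, (β₁ : ℂ) / a j + (β₂ : ℂ) / (a j - 1) -
      ∑ k ∈ Finset.univ.erase j, 2 / (a j - a k) = 0 := by
  obtain ⟨m₁, rfl⟩ : ∃ m, β₁ = m + 1 := ⟨β₁ - 1, (Nat.succ_pred_eq_of_pos hβ₁).symm⟩
  obtain ⟨m₂, rfl⟩ : ∃ m, β₂ = m + 1 := ⟨β₂ - 1, (Nat.succ_pred_eq_of_pos hβ₂).symm⟩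
  intro j
  set A := a j with hA
  set u : Finset (Fin N) := Finset.univ.erase j with hu
  set n : ℂ → ℂ := fun z => c * z ^ (m₁ + 1) * (z - 1) ^ (m₂ + 1) with hn_def
  set P : ℂ → ℂ := fun z => ∏ k ∈ u, (z - a k) ^ 2 with hP_def
  set h : ℂ → ℂ := fun z => n z / P z with hh_def
  -- nonvanishing facts
  have hAk : ∀ k ∈ u, A - a k ≠ 0 := by
    intro k hk
    have : a k ≠ A := fun e => (Finset.mem_erase.mp hk).1 (hinj e)
    exact sub_ne_zero.mpr (Ne.symm this)
  have hPA : P A ≠ 0 := by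
    simp only [hP_def]
    exact Finset.prod_ne_zero_iff.mpr fun k hk => pow_ne_zero _ (hAk k hk)
  have hA0 : A ≠ 0 := (ha j).1
  have hA1 : A - 1 ≠ 0 := sub_ne_zero.mpr (ha j).2
  have hnA : n A ≠ 0 := by
    simp only [hn_def]
    exact mul_ne_zero (mul_ne_zero hc (pow_ne_zero _ hA0)) (pow_ne_zero _ hA1)
  -- choose a radius avoiding the other poles
  obtain ⟨R, hR, hball⟩ : ∃ R > 0, ∀ z ∈ closedBall A R, ∀ k ∈ u, z ≠ a k := by
    set S : Set ℂ := ⋃ k ∈ u, {a k} with hS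
    have hSfin : S.Finite :=
      Set.Finite.biUnion u.finite_toSet fun _ _ => Set.finite_singleton _
    have hAS : A ∈ Sᶜ := by
      simp only [hS, Set.mem_compl_iff, Set.mem_iUnion, Set.mem_singleton_iff, not_exists]
      intro k hk e
      exact (Finset.mem_erase.mp hk).1 (hinj e).symm
    obtain ⟨ε, hε, hsub⟩ := Metric.isOpen_iff.mp hSfin.isClosed.isOpen_compl A hAS
    refine ⟨ε / 2, by linarith, fun z hz k hk e => ?_⟩
    have hzS : z ∈ Sᶜ := hsub (lt_of_le_of_lt (mem_closedBall.mp hz) (by linarith))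
    exact hzS (Set.mem_biUnion hk e)
  -- differentiability
  have hPdiff : Differentiable ℂ P :=
    Differentiable.fun_finsetProd fun k _ => (differentiable_id.sub_const (a k)).pow 2
  have hndiff : Differentiable ℂ n :=
    ((differentiable_id.pow (m₁ + 1)).const_mul c).mul ((differentiable_id.sub_const 1).pow (m₂ + 1))
  set U : Set ℂ := {z | ∀ k ∈ u, z ≠ a k} with hU_def
  have hUopen : IsOpen U := by
    have hUe : U = (⋃ k ∈ u, {a k} : Set ℂ)ᶜ := by
      ext z
      simp [hU_def]
    rw [hUe]
    exact (Set.Finite.biUnion u.finite_toSet fun _ _ =>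
      Set.finite_singleton _).isClosed.isOpen_compl
  have hhdiff : DifferentiableOn ℂ h U := by
    refine DifferentiableOn.div hndiff.differentiableOn hPdiff.differentiableOn ?_
    intro z hz
    exact Finset.prod_ne_zero_iff.mpr fun k hk => pow_ne_zero _ (sub_ne_zero.mpr (hz k hk))
  have hsubU : closedBall A R ⊆ U := fun z hz k hk => hball z hz k hk
  -- Cauchy integral formula for the derivative
  have hcauchy := Complex.two_pi_I_inv_smul_circleIntegral_sub_sq_inv_smul_of_differentiable
    hUopen hsubU hhdiff (mem_ball_self hR)
  -- the integrand agrees with g' on the circle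
  have hEq : Set.EqOn (fun z : ℂ => ((z - A) ^ 2)⁻¹ • h z)
      (fun z : ℂ => c * z ^ (m₁ + 1) * (z - 1) ^ (m₂ + 1) / ∏ k, (z - a k) ^ 2)
      (sphere A R) := by
    intro z hz
    have hzA : z - A ≠ 0 := sub_ne_zero.mpr (ne_of_mem_sphere hz hR.ne')
    have hzk : ∀ k ∈ u, z - a k ≠ 0 := fun k hk =>
      sub_ne_zero.mpr (hball z (sphere_subset_closedBall hz) k hk)
    have hPz : P z ≠ 0 := Finset.prod_ne_zero_iff.mpr fun k hk => pow_ne_zero _ (hzk k hk)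
    have hprod : (∏ k, (z - a k) ^ 2) = (z - A) ^ 2 * P z :=
      (Finset.mul_prod_erase Finset.univ _ (Finset.mem_univ j)).symm
    simp only [smul_eq_mul, hh_def, hn_def, hP_def] at *
    rw [hprod]
    field_simp
  -- the circle integral of g' vanishes since g is a primitive
  have hzero : (∮ z in C(A, R),
      c * z ^ (m₁ + 1) * (z - 1) ^ (m₂ + 1) / ∏ k, (z - a k) ^ 2) = 0 := by
    apply circleIntegral.integral_eq_zero_of_hasDerivWithinAt hR.le
    intro z hz
    have hz' : ∀ k, z ≠ a k := by
      intro k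
      by_cases hk : k = j
      · subst hk; exact ne_of_mem_sphere hz hR.ne'
      · exact hball z (sphere_subset_closedBall hz) k
          (Finset.mem_erase.mpr ⟨hk, Finset.mem_univ k⟩)
    exact (hg z hz').hasDerivWithinAt
  have hderiv0 : deriv h A = 0 := by
    rw [← hcauchy, circleIntegral.integral_congr hR.le hEq, hzero, smul_zero]
  -- compute the derivative of h at A
  have hn' : HasDerivAt n (n A * ((m₁ + 1 : ℂ) / A + (m₂ + 1 : ℂ) / (A - 1))) A := by
    have h1 : HasDerivAt (fun z : ℂ => z ^ (m₁ + 1)) ((m₁ + 1 : ℂ) * A ^ m₁) A := by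
      simpa using hasDerivAt_pow (m₁ + 1) A
    have h2 : HasDerivAt (fun z : ℂ => (z - 1) ^ (m₂ + 1)) ((m₂ + 1 : ℂ) * (A - 1) ^ m₂) A := by
      simpa [Function.comp_def] using (hasDerivAt_pow (m₂ + 1) (A - 1)).comp A ((hasDerivAt_id A).sub_const 1)
    have h3 := (h1.fun_mul h2).const_mul c
    have e1 : (fun z : ℂ => c * (z ^ (m₁ + 1) * (z - 1) ^ (m₂ + 1))) = n := by
      funext z; rw [hn_def]; ring
    have e2 : c * ((m₁ + 1 : ℂ) * A ^ m₁ * (A - 1) ^ (m₂ + 1) +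
        A ^ (m₁ + 1) * ((m₂ + 1 : ℂ) * (A - 1) ^ m₂)) =
        n A * ((m₁ + 1 : ℂ) / A + (m₂ + 1 : ℂ) / (A - 1)) := by
      rw [hn_def]
      field_simp
      ring
    rw [e1, e2] at h3
    exact h3
  have hP' : HasDerivAt P (P A * ∑ k ∈ u, 2 / (A - a k)) A := by
    have hfac : ∀ k ∈ u, HasDerivAt (fun z : ℂ => (z - a k) ^ 2) (2 * (A - a k)) A := by
      intro k _
      simpa using ((hasDerivAt_id A).sub_const (a k)).fun_pow 2
    have h3 := HasDerivAt.fun_finsetProd hfac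
    have e2 : (∑ k ∈ u, (∏ l ∈ u.erase k, (A - a l) ^ 2) • (2 * (A - a k))) =
        P A * ∑ k ∈ u, 2 / (A - a k) := by
      rw [Finset.mul_sum]
      refine Finset.sum_congr rfl fun k hk => ?_
      have hPAk2 : P A = (A - a k) ^ 2 * ∏ l ∈ u.erase k, (A - a l) ^ 2 :=
        (Finset.mul_prod_erase u _ hk).symm
      rw [smul_eq_mul, hPAk2]
      field_simp [hAk k hk]
    rw [e2] at h3
    exact h3
  have hh' : HasDerivAt h
      ((n A * ((m₁ + 1 : ℂ) / A + (m₂ + 1 : ℂ) / (A - 1)) * P A -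
        n A * (P A * ∑ k ∈ u, 2 / (A - a k))) / P A ^ 2) A := hn'.div hP' hPA
  have hkey : (n A * ((m₁ + 1 : ℂ) / A + (m₂ + 1 : ℂ) / (A - 1)) * P A -
      n A * (P A * ∑ k ∈ u, 2 / (A - a k))) / P A ^ 2 = 0 := by
    rw [← hh'.deriv]; exact hderiv0
  have hnum : n A * ((m₁ + 1 : ℂ) / A + (m₂ + 1 : ℂ) / (A - 1)) * P A -
      n A * (P A * ∑ k ∈ u, 2 / (A - a k)) = 0 := by
    have := (div_eq_zero_iff.mp hkey).resolve_right (pow_ne_zero 2 hPA)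
    exact this
  have hfinal : n A * P A * (((m₁ + 1 : ℂ) / A + (m₂ + 1 : ℂ) / (A - 1)) -
      ∑ k ∈ u, 2 / (A - a k)) = 0 := by linear_combination hnum
  have := (mul_eq_zero.mp hfinal).resolve_left (mul_ne_zero hnA hPA)
  push_cast
  push_cast at this
  linear_combination this
end

section
/- The restriction of the matrix exponential to i·su(2) (Hermitian traceless 2×2 matrices) is a bijection onto the set H³ = {a·a* : a ∈ SL(2,ℂ)} of positive definite Hermitian matrices of determinant 1. -/
open Matrix

/-- The matrix exponential on `2×2` complex matrices. -/
noncomputable def mexp (A : Matrix (Fin 2) (Fin 2) ℂ) : Matrix (Fin 2) (Fin 2) ℂ :=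
  letI : NormedRing (Matrix (Fin 2) (Fin 2) ℂ) := Matrix.linftyOpNormedRing
  letI : NormedAlgebra ℂ (Matrix (Fin 2) (Fin 2) ℂ) := Matrix.linftyOpNormedAlgebra
  NormedSpace.exp A

/-!
On Hermitian matrices the exponential is a bijection onto the positive definite matrices, its
inverse being the logarithm of the continuous functional calculus. Diagonalising,
`det (exp A) = exp (tr A)`, and the trace of a Hermitian matrix is real, so under this bijection
the traceless matrices correspond exactly to those of determinant one. Finally, a positive
definite matrix `M` of determinant one is `a * aᴴ` with `a = √M`, and `det √M = √(det M) = 1`.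
-/

open scoped MatrixOrder ComplexOrder

namespace Matrix

variable {n 𝕜 : Type*} [Fintype n] [DecidableEq n] [RCLike 𝕜]

lemma IsHermitian.det_cfc {A : Matrix n n 𝕜} (hA : A.IsHermitian) (f : ℝ → ℝ) :
    (cfc f A).det = ∏ i, (f (hA.eigenvalues i) : 𝕜) := by
  simp [hA.cfc_eq, IsHermitian.cfc, -Unitary.conjStarAlgAut_apply]

theorem setOf_exists_det_eq_one_and_eq_mul_conjTranspose :
    {M : Matrix n n 𝕜 | ∃ a : Matrix n n 𝕜, a.det = 1 ∧ M = a * aᴴ} =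
      {M | M.PosDef ∧ M.det = 1} := by
  ext M
  constructor
  · rintro ⟨a, ha, rfl⟩
    have hunit : IsUnit a := (isUnit_iff_isUnit_det a).mpr (ha ▸ isUnit_one)
    exact ⟨PosDef.mul_conjTranspose_self a (vecMul_injective_of_isUnit hunit),
      by simp [det_conjTranspose, ha]⟩
  · rintro ⟨hM, hdet⟩
    refine ⟨CFC.sqrt M, by rw [hM.posSemidef.det_sqrt, hdet]; simp, ?_⟩
    rw [← star_eq_conjTranspose, (CFC.sqrt_nonneg M).isSelfAdjoint.star_eq,
      CFC.sqrt_mul_sqrt_self M hM.posSemidef.nonneg]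

variable {A : Matrix n n ℂ}

/- The functional-calculus lemmas about `exp` and `log` need a normed algebra structure; any will
do, since `NormedSpace.exp` only depends on the topology. -/
theorem IsHermitian.det_exp (hA : A.IsHermitian) :
    (NormedSpace.exp A).det = Complex.exp A.trace := by
  open scoped Norms.L2Operator in
  rw [← CFC.real_exp_eq_normedSpace_exp hA, hA.det_cfc, hA.trace_eq_sum_eigenvalues,
    Complex.exp_sum]
  simp

theorem IsHermitian.det_exp_eq_one_iff (hA : A.IsHermitian) :
    (NormedSpace.exp A).det = 1 ↔ A.trace = 0 := by
  rw [hA.det_exp, hA.trace_eq_sum_eigenvalues, RCLike.ofReal_eq_complex_ofReal,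
    ← Complex.ofReal_sum, ← Complex.ofReal_exp, Complex.ofReal_eq_one, Complex.ofReal_eq_zero,
    Real.exp_eq_one_iff]

theorem exp_bijOn_isHermitian_posDef :
    Set.BijOn NormedSpace.exp {A : Matrix n n ℂ | A.IsHermitian} {M | M.PosDef} := by
  open scoped Norms.L2Operator in
  refine Set.InvOn.bijOn (f' := CFC.log) ⟨fun A hA => CFC.log_exp A hA, fun M hM => ?_⟩ ?_ ?_
  · exact CFC.exp_log M hM.isStrictlyPositive
  · exact fun A hA => isStrictlyPositive_iff_posDef.mp <|
      (isUnit_exp A).isStrictlyPositive (IsSelfAdjoint.exp_nonneg hA)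
  · exact fun M _ => IsSelfAdjoint.log

end Matrix

/-- the matrix exponential restricts to a bijection from the set of
Hermitian traceless `2×2` matrices (`i·su(2)`) onto `H³ = {a·a* : a ∈ SL(2,ℂ)}`. -/
theorem exp_bijOn_hermitian_traceless :
    Set.BijOn mexp
      {A : Matrix (Fin 2) (Fin 2) ℂ | Aᴴ = A ∧ A.trace = 0}
      {m : Matrix (Fin 2) (Fin 2) ℂ | ∃ a : Matrix (Fin 2) (Fin 2) ℂ,
        a.det = 1 ∧ m = a * aᴴ} := by
  have hmexp : mexp = NormedSpace.exp := rfl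
  have htraceless : {A : Matrix (Fin 2) (Fin 2) ℂ | Aᴴ = A ∧ A.trace = 0} =
      {A | A.IsHermitian} ∩ NormedSpace.exp ⁻¹' {M | M.det = 1} :=
    Set.ext fun _ => and_congr_right fun hA => (IsHermitian.det_exp_eq_one_iff hA).symm
  rw [hmexp, htraceless, setOf_exists_det_eq_one_and_eq_mul_conjTranspose]
  exact exp_bijOn_isHermitian_posDef.inter_mapsTo (Set.mapsTo_preimage _ _) Set.inter_subset_right
end
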